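/- With V = diag(σ_u² + D_i), Σ = V − X(XᵀV^{-1}X)^{-1}Xᵀ, e_i the i-th standard basis vector, B_i = D_i/(σ_u² + D_i), and β̃(σ_u²) = (XᵀV^{-1}X)^{-1}XᵀV^{-1}θ̂: the partial derivative of the Bayes estimator θ̂_i^B = (1−B_i)θ̂_i + B_i x_iᵀβ̃(σ_u²) with respect to σ_u² equals [B_i² D_i^{-1} e_iᵀ − B_i x_iᵀ(XᵀV^{-1}X)^{-1}XᵀV^{-2}] ũ, where ũ = θ̂ − Xβ̃(σ_u²); equivalently it equals B_i e_iᵀ Σ V^{-2} ũ. -/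

import Mathlib

/-!
Write `W = V⁻¹` and `A = XᵀWX`. Since `V' = 1`, the inverse rule gives `W' = -W²` and
`(A⁻¹)' = A⁻¹XᵀW²XA⁻¹`, so `β̃' = A⁻¹XᵀW²Xβ̃ - A⁻¹XᵀW²θ̂ = -A⁻¹XᵀW²ũ`. With `B_i' = -B_i²/D_i`
the product rule applied to `θ̂_i^B = θ̂_i - B_i (θ̂_i - x_iᵀβ̃)` gives the first form. The second
follows from `ΣV⁻² = V⁻¹ - XA⁻¹XᵀV⁻²` and `B_i/(σ_u² + D_i) = B_i²/D_i`.
-/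

open Matrix BigOperators

noncomputable def glsEstimator {m p : Type*} [Fintype m] [Fintype p] [DecidableEq m]
    [DecidableEq p] (X : Matrix m p ℝ) (V : Matrix m m ℝ) (θ : m → ℝ) : p → ℝ :=
  ((Xᵀ * V⁻¹ * X)⁻¹ * Xᵀ * V⁻¹) *ᵥ θ

section MatrixCalculus

-- Matrices have no global norm. Any norm gives the same derivatives; the operator norm is
-- chosen because `hasFDerivAt_ringInverse` needs a normed algebra.
attribute [local instance] Matrix.linftyOpNormedAddCommGroup Matrix.linftyOpNormedSpace
  Matrix.linftyOpNormedRing Matrix.linftyOpNormedAlgebra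

variable {l m n : Type*} [Fintype l] [Fintype m] [Fintype n] {t : ℝ}

theorem hasDerivAt_matrix_iff {f : ℝ → Matrix m n ℝ} {f' : Matrix m n ℝ} :
    HasDerivAt f f' t ↔ ∀ i j, HasDerivAt (fun s => f s i j) (f' i j) t := by
  let e := (ofLinearEquiv ℝ : (m → n → ℝ) ≃ₗ[ℝ] Matrix m n ℝ).toContinuousLinearEquiv
  constructor
  · intro h i j
    exact hasDerivAt_pi.1 (hasDerivAt_pi.1 (e.symm.hasFDerivAt.comp_hasDerivAt t h) i) j
  · intro h
    exact e.hasFDerivAt.comp_hasDerivAt t (hasDerivAt_pi.2 fun i => hasDerivAt_pi.2 (h i))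

theorem HasDerivAt.matrix_mul {F : ℝ → Matrix l m ℝ} {G : ℝ → Matrix m n ℝ}
    {F' : Matrix l m ℝ} {G' : Matrix m n ℝ} (hF : HasDerivAt F F' t) (hG : HasDerivAt G G' t) :
    HasDerivAt (fun s => F s * G s) (F' * G t + F t * G') t := by
  rw [hasDerivAt_matrix_iff] at hF hG ⊢
  intro i j
  simpa only [mul_apply, Matrix.add_apply, Finset.sum_add_distrib] using
    HasDerivAt.fun_sum (u := Finset.univ) fun k _ => (hF i k).fun_mul (hG k j)

theorem HasDerivAt.matrix_inv [DecidableEq n] {A : ℝ → Matrix n n ℝ} {A' : Matrix n n ℝ}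
    (hA : HasDerivAt A A' t) (hAt : IsUnit (A t).det) :
    HasDerivAt (fun s => (A s)⁻¹) (-((A t)⁻¹ * A' * (A t)⁻¹)) t := by
  obtain ⟨u, hu⟩ := (isUnit_iff_isUnit_det _).2 hAt
  have hinv := hasFDerivAt_ringInverse (𝕜 := ℝ) u
  rw [hu] at hinv
  have h := hinv.comp_hasDerivAt t hA
  simp only [Function.comp_def, ← nonsing_inv_eq_ringInverse] at h
  refine h.congr_deriv ?_
  simp [ContinuousLinearMap.mulLeftRight_apply, coe_units_inv, hu]

theorem HasDerivAt.matrix_mulVec {M : ℝ → Matrix m n ℝ} {M' : Matrix m n ℝ}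
    (hM : HasDerivAt M M' t) (v : n → ℝ) :
    HasDerivAt (fun s => M s *ᵥ v) (M' *ᵥ v) t := by
  rw [hasDerivAt_matrix_iff] at hM
  exact hasDerivAt_pi.2 fun i => HasDerivAt.fun_sum fun j _ => (hM i j).mul_const (v j)

theorem HasDerivAt.matrix_diagonal [DecidableEq n] {d : ℝ → n → ℝ} {d' : n → ℝ}
    (hd : HasDerivAt d d' t) :
    HasDerivAt (fun s => diagonal (d s)) (diagonal d') t := by
  rw [hasDerivAt_matrix_iff]
  intro i j
  rcases eq_or_ne i j with rfl | hij
  · simpa using hasDerivAt_pi.1 hd i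
  · simpa [hij] using hasDerivAt_const t (0 : ℝ)

theorem hasDerivAt_glsEstimator {p : Type*} [Fintype p] [DecidableEq m] [DecidableEq p]
    {V : ℝ → Matrix m m ℝ} {V' : Matrix m m ℝ} (hV : HasDerivAt V V' t)
    (hVt : IsUnit (V t).det) (X : Matrix m p ℝ) (hA : IsUnit (Xᵀ * (V t)⁻¹ * X).det)
    (θ : m → ℝ) :
    HasDerivAt (fun s => glsEstimator X (V s) θ)
      (-(((Xᵀ * (V t)⁻¹ * X)⁻¹ * Xᵀ * (V t)⁻¹ * V' * (V t)⁻¹) *ᵥ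
        (θ - X *ᵥ glsEstimator X (V t) θ))) t := by
  have hW := hV.matrix_inv hVt
  have hAinv := (((hasDerivAt_const t Xᵀ).matrix_mul hW).matrix_mul
    (hasDerivAt_const t X)).matrix_inv hA
  refine (((hAinv.matrix_mul (hasDerivAt_const t Xᵀ)).matrix_mul hW).matrix_mulVec θ).congr_deriv
    ?_
  rw [glsEstimator, mulVec_sub, mulVec_mulVec, mulVec_mulVec, ← sub_mulVec, ← neg_mulVec]
  congr 1
  simp only [Matrix.zero_mul, Matrix.mul_zero, zero_add, add_zero, Matrix.mul_neg,
    Matrix.neg_mul, neg_neg, Matrix.mul_assoc]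
  abel

theorem hasDerivAt_glsEstimator_diagonal_add {p : Type*} [Fintype p] [DecidableEq m]
    [DecidableEq p] (D : m → ℝ) (hVt : IsUnit (diagonal fun k => t + D k).det)
    (X : Matrix m p ℝ) (hA : IsUnit (Xᵀ * (diagonal fun k => t + D k)⁻¹ * X).det) (θ : m → ℝ) :
    HasDerivAt (fun s => glsEstimator X (diagonal fun k => s + D k) θ)
      (-(((Xᵀ * (diagonal fun k => t + D k)⁻¹ * X)⁻¹ * Xᵀ * (diagonal fun k => t + D k)⁻¹ *
        (diagonal fun k => t + D k)⁻¹) *ᵥ (θ - X *ᵥ glsEstimator X (diagonal fun k => t + D k) θ)))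
      t := by
  have hV : HasDerivAt (fun s => diagonal fun k => s + D k) 1 t := by
    simpa using (hasDerivAt_pi.2 fun k => (hasDerivAt_id t).add_const (D k)).matrix_diagonal
  simpa using hasDerivAt_glsEstimator hV hVt X hA θ

end MatrixCalculus

theorem HasDerivAt.const_dotProduct {n : Type*} [Fintype n] {t : ℝ} {v : ℝ → n → ℝ} {v' : n → ℝ}
    (hv : HasDerivAt v v' t) (w : n → ℝ) :
    HasDerivAt (fun s => w ⬝ᵥ v s) (w ⬝ᵥ v') t :=
  HasDerivAt.fun_sum fun j _ => (hasDerivAt_pi.1 hv j).const_mul (w j)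

theorem Matrix.mulVec_injective_of_rank_eq {K m n : Type*} [Field K] [Fintype n]
    {A : Matrix m n K} (hA : A.rank = Fintype.card n) : Function.Injective A.mulVec := by
  have h := LinearMap.finrank_range_add_finrank_ker A.mulVecLin
  rw [Module.finrank_fintype_fun_eq_card, ← Matrix.rank, hA, add_eq_left,
    Submodule.finrank_eq_zero, LinearMap.ker_eq_bot] at h
  exact h

theorem Matrix.PosDef.isUnit_det_transpose_mul_mul {m p : Type*} [Fintype m] [Fintype p]
    [DecidableEq p] {W : Matrix m m ℝ} (hW : W.PosDef) {X : Matrix m p ℝ}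
    (hX : Function.Injective X.mulVec) : IsUnit (Xᵀ * W * X).det :=
  (isUnit_iff_isUnit_det _).1 (hW.conjTranspose_mul_mul_same hX).isUnit

/-- Derivative of the Bayes estimator `θ̂_i^B(σ_u²) = (1−B_i)θ̂_i + B_i x_iᵀβ̃(σ_u²)` with
respect to `σ_u²` equals `[B_i²D_i⁻¹e_iᵀ − B_i x_iᵀ(XᵀV⁻¹X)⁻¹XᵀV⁻²]ũ`, which also equals
`B_i e_iᵀ Σ V⁻² ũ`, where `ũ = θ̂ − Xβ̃(σ_u²)` and `Σ = V − X(XᵀV⁻¹X)⁻¹Xᵀ`. -/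
theorem bayes_estimator_deriv {m p : ℕ} (σu : ℝ) (hσ : 0 < σu)
    (D : Fin m → ℝ) (hD : ∀ k, 0 < D k)
    (X : Matrix (Fin m) (Fin p) ℝ) (hX : X.rank = p)
    (θ : Fin m → ℝ) (i : Fin m) :
    let V : ℝ → Matrix (Fin m) (Fin m) ℝ := fun s => Matrix.diagonal fun k => s + D k
    let βt : ℝ → Fin p → ℝ := fun s => ((Xᵀ * (V s)⁻¹ * X)⁻¹ * Xᵀ * (V s)⁻¹).mulVec θ
    let B : ℝ → ℝ := fun s => D i / (s + D i)
    let θB : ℝ → ℝ := fun s => (1 - B s) * θ i + B s * (X i ⬝ᵥ βt s)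
    let ut : Fin m → ℝ := θ - X.mulVec (βt σu)
    let Sg : Matrix (Fin m) (Fin m) ℝ := V σu - X * (Xᵀ * (V σu)⁻¹ * X)⁻¹ * Xᵀ
    let dval : ℝ := (B σu) ^ 2 * (D i)⁻¹ * ut i
      - B σu * (X i ⬝ᵥ ((Xᵀ * (V σu)⁻¹ * X)⁻¹ * Xᵀ * (V σu)⁻¹ * (V σu)⁻¹).mulVec ut)
    HasDerivAt θB dval σu ∧
      dval = B σu * ((Sg * (V σu)⁻¹ * (V σu)⁻¹).mulVec ut) i := by
  intro V βt B θB ut Sg dval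
  have hw : ∀ k, 0 < σu + D k := fun k => add_pos hσ (hD k)
  have hVpos : (V σu).PosDef := posDef_diagonal_iff.2 hw
  have hVdet : IsUnit (V σu).det := (isUnit_iff_isUnit_det _).1 hVpos.isUnit
  have hAdet : IsUnit (Xᵀ * (V σu)⁻¹ * X).det :=
    hVpos.inv.isUnit_det_transpose_mul_mul (mulVec_injective_of_rank_eq (by simpa using hX))
  have hβ : HasDerivAt βt
      (-(((Xᵀ * (V σu)⁻¹ * X)⁻¹ * Xᵀ * (V σu)⁻¹ * (V σu)⁻¹) *ᵥ ut)) σu :=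
    hasDerivAt_glsEstimator_diagonal_add D hVdet X hAdet θ
  have hB : HasDerivAt B (-(D i) / (σu + D i) ^ 2) σu := by
    refine ((hasDerivAt_const σu (D i)).div ((hasDerivAt_id σu).add_const (D i))
      (hw i).ne').congr_deriv ?_
    simp
  have hVinv : ∀ v, ((V σu)⁻¹ *ᵥ v) i = (σu + D i)⁻¹ * v i := fun v => by
    rw [inv_eq_left_inv (B := diagonal fun k => (σu + D k)⁻¹)
      (by simp [V, fun k => (hw k).ne']), mulVec_diagonal]
  have hSg : Sg * (V σu)⁻¹ * (V σu)⁻¹ =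
      (V σu)⁻¹ - X * ((Xᵀ * (V σu)⁻¹ * X)⁻¹ * Xᵀ * (V σu)⁻¹ * (V σu)⁻¹) := by
    simp only [Sg, Matrix.sub_mul, mul_nonsing_inv _ hVdet, Matrix.one_mul, Matrix.mul_assoc]
  have hrow : ∀ v, (X *ᵥ v) i = X i ⬝ᵥ v := fun _ => rfl
  have hne := (hw i).ne'
  have hDi := (hD i).ne'
  refine ⟨((((hasDerivAt_const σu 1).sub hB).mul_const (θ i)).add
    (hB.mul (hβ.const_dotProduct (X i)))).congr_deriv ?_, ?_⟩
  · simp only [dval, ut, B, dotProduct_neg, Pi.sub_apply, hrow]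
    field_simp
    ring
  · rw [hSg, sub_mulVec, Pi.sub_apply, hVinv, ← mulVec_mulVec, hrow]
    simp only [dval, B]
    field_simp
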